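/- Let n = 2 + 4k for k ≥ 0 and let G = Q_{2n} = ⟨x, y | xⁿ = y², x^{2n} = 1, y⁻¹xy = x⁻¹⟩ be the generalized quaternion group of order 4n. The smallest normal subgroup N of G such that swapping x and y induces an automorphism of G/N satisfies G/N ≅ Q₈ (the quaternion group of order 8); hence |N| = 2k + 1. -/

import Mathlib

/-- Swapping `a` and `b` induces an automorphism of `G ⧸ N`. -/
def swapInducesAut {G : Type*} [Group G] (a b : G) (N : Subgroup G) (hN : N.Normal) :
    Prop := by
  letI := hN
  exact ∃ φ : (G ⧸ N) ≃* (G ⧸ N),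
    φ (QuotientGroup.mk a) = QuotientGroup.mk b ∧
    φ (QuotientGroup.mk b) = QuotientGroup.mk a

/-- `G ⧸ N` is isomorphic to `T`. -/
def quotIsoTo {G : Type*} [Group G] (N : Subgroup G) (hN : N.Normal)
    (T : Type*) [Group T] : Prop := by
  letI := hN
  exact Nonempty ((G ⧸ N) ≃* T)

/-- Relators of the generalized quaternion group
`Q_{2n} = ⟨x, y | xⁿ = y², x^{2n} = 1, y⁻¹xy = x⁻¹⟩`,
with generator `0` for `x` and `1` for `y`. -/
def genQuaternionRels (n : ℕ) : Set (FreeGroup (Fin 2)) :=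
  {FreeGroup.of 0 ^ n * (FreeGroup.of 1 ^ 2)⁻¹, FreeGroup.of 0 ^ (2 * n),
   (FreeGroup.of 1)⁻¹ * FreeGroup.of 0 * FreeGroup.of 1 * FreeGroup.of 0}

namespace Stmt9
open QuaternionGroup

lemma mk_rel {α : Type*} {rels : Set (FreeGroup α)} {r : FreeGroup α} (h : r ∈ rels) :
    PresentedGroup.mk rels r = 1 :=
  (QuotientGroup.eq_one_iff _).mpr (Subgroup.subset_normalClosure h)

variable (k : ℕ)

abbrev n (k : ℕ) : ℕ := 2 + 4 * k
abbrev G (k : ℕ) := PresentedGroup (genQuaternionRels (n k))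
abbrev Q (k : ℕ) := QuaternionGroup (n k)

def x : G k := PresentedGroup.of 0
def y : G k := PresentedGroup.of 1

instance : NeZero (n k) := ⟨by show 2+4*k ≠ 0; omega⟩
instance : NeZero (2 * n k) := ⟨by show 2*(2+4*k) ≠ 0; omega⟩

lemma rel1 : x k ^ (n k) = y k ^ 2 := by
  have h := mk_rel (rels := genQuaternionRels (n k))
    (r := FreeGroup.of 0 ^ (n k) * (FreeGroup.of 1 ^ 2)⁻¹)
    (by simp [genQuaternionRels])
  rw [map_mul, map_inv, map_pow, map_pow, mul_inv_eq_one] at h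
  exact h

lemma rel2 : x k ^ (2 * n k) = 1 := by
  have h := mk_rel (rels := genQuaternionRels (n k))
    (r := FreeGroup.of 0 ^ (2 * n k)) (by simp [genQuaternionRels])
  rwa [map_pow] at h

lemma rel3 : (y k)⁻¹ * x k * y k = (x k)⁻¹ := by
  have h := mk_rel (rels := genQuaternionRels (n k))
    (r := (FreeGroup.of 1)⁻¹ * FreeGroup.of 0 * FreeGroup.of 1 * FreeGroup.of 0)
    (by simp [genQuaternionRels])
  rw [map_mul, map_mul, map_mul, map_inv] at h
  have hx : PresentedGroup.mk (genQuaternionRels (n k)) (FreeGroup.of 0) = x k := rfl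
  have hy : PresentedGroup.mk (genQuaternionRels (n k)) (FreeGroup.of 1) = y k := rfl
  rw [hx, hy] at h
  exact eq_inv_of_mul_eq_one_left h


def fmap : G k →* Q k :=
  PresentedGroup.toGroup (f := ![a 1, xa 0]) (by
    intro r hr
    simp only [genQuaternionRels, Set.mem_insert_iff, Set.mem_singleton_iff] at hr
    rcases hr with rfl | rfl | rfl
    · rw [map_mul, map_inv, map_pow, map_pow, FreeGroup.lift_apply_of, FreeGroup.lift_apply_of]
      simp only [Matrix.cons_val_zero, Matrix.cons_val_one, Matrix.head_cons]
      rw [a_one_pow, xa_sq, mul_inv_cancel]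
    · rw [map_pow, FreeGroup.lift_apply_of]
      simp only [Matrix.cons_val_zero]
      rw [a_one_pow]
      rw [ZMod.natCast_self, one_def]
    · rw [map_mul, map_mul, map_mul, map_inv, FreeGroup.lift_apply_of, FreeGroup.lift_apply_of]
      simp only [Matrix.cons_val_zero, Matrix.cons_val_one, Matrix.head_cons]
      rw [mul_assoc, mul_assoc, inv_mul_eq_one, xa_mul_a, a_mul_xa]
      norm_num)

@[simp] lemma fmap_x : fmap k (x k) = a 1 := by
  show fmap k (PresentedGroup.of 0) = a 1
  rw [fmap, PresentedGroup.toGroup.of]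
  simp

@[simp] lemma fmap_y : fmap k (y k) = xa 0 := by
  show fmap k (PresentedGroup.of 1) = xa 0
  rw [fmap, PresentedGroup.toGroup.of]
  simp

lemma xzpow_y (m : ℤ) : x k ^ m * y k = y k * x k ^ (-m) := by
  have h := conj_zpow (i := m) (a := (y k)⁻¹) (b := x k)
  rw [inv_inv, rel3, inv_zpow, ← zpow_neg] at h
  calc x k ^ m * y k = y k * ((y k)⁻¹ * x k ^ m * y k) := by group
  _ = y k * x k ^ (-m) := by rw [← h]

lemma ypow2 : y k ^ 2 = x k ^ ((n k : ℕ) : ℤ) := by rw [zpow_natCast, ← rel1]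

lemma yinv : (y k)⁻¹ = y k * x k ^ (-((n k : ℕ) : ℤ)) := by
  have h : y k * (y k * x k ^ (-((n k : ℕ) : ℤ))) = 1 := by
    rw [← mul_assoc, ← sq, ypow2, ← zpow_add, add_neg_cancel, zpow_zero]
  exact inv_eq_of_mul_eq_one_right h

lemma normal_form (t : G k) : ∃ (m : ℤ) (e : Bool), t = (cond e (y k) 1) * x k ^ m := by
  have ht : t ∈ Subgroup.closure (Set.range (PresentedGroup.of : Fin 2 → G k)) := by
    rw [PresentedGroup.closure_range_of]; trivial
  induction ht using Subgroup.closure_induction with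
  | mem g hg =>
    obtain ⟨i, rfl⟩ := hg
    fin_cases i
    · exact ⟨1, false, by simp [x]⟩
    · exact ⟨0, true, by simp [y]⟩
  | one => exact ⟨0, false, by simp⟩
  | mul t1 t2 h1 h2 ih1 ih2 =>
    obtain ⟨m1, e1, rfl⟩ := ih1
    obtain ⟨m2, e2, rfl⟩ := ih2
    cases e1 <;> cases e2
    · refine ⟨m1 + m2, false, ?_⟩
      simp only [Bool.cond_false, one_mul, ← zpow_add]
    · refine ⟨m2 - m1, true, ?_⟩
      simp only [Bool.cond_false, Bool.cond_true, one_mul]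
      rw [← mul_assoc, xzpow_y, mul_assoc, ← zpow_add, neg_add_eq_sub]
    · refine ⟨m1 + m2, true, ?_⟩
      simp only [Bool.cond_false, Bool.cond_true, one_mul]
      rw [mul_assoc, ← zpow_add]
    · refine ⟨((n k : ℕ) : ℤ) + (m2 - m1), false, ?_⟩
      simp only [Bool.cond_false, Bool.cond_true, one_mul]
      have hmid : x k ^ m1 * (y k * x k ^ m2) = y k * (x k ^ (-m1) * x k ^ m2) := by
        rw [← mul_assoc, xzpow_y, mul_assoc]
      rw [mul_assoc, hmid, ← mul_assoc, ← sq, ypow2, ← zpow_add, ← zpow_add]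
      congr 1
      ring
  | inv t1 h1 ih1 =>
    obtain ⟨m1, e1, rfl⟩ := ih1
    cases e1
    · refine ⟨-m1, false, ?_⟩
      simp only [Bool.cond_false, one_mul]
      rw [zpow_neg]
    · refine ⟨m1 - ((n k : ℕ) : ℤ), true, ?_⟩
      simp only [Bool.cond_true]
      rw [mul_inv_rev, ← zpow_neg, yinv, ← mul_assoc, xzpow_y, neg_neg, mul_assoc, ← zpow_add]
      congr 1

lemma xzpow_eq (m : ℤ) : x k ^ m = x k ^ (((m : ZMod (2 * n k)).val : ℤ)) := by
  have h2 : x k ^ ((2 * n k : ℕ) : ℤ) = 1 := by rw [zpow_natCast, rel2]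
  set v : ℤ := ((m : ZMod (2 * n k)).val : ℤ) with hv
  have hdvd : ((2 * n k : ℕ) : ℤ) ∣ (m - v) := by
    rw [← ZMod.intCast_zmod_eq_zero_iff_dvd]
    push_cast [hv, ZMod.natCast_val, ZMod.intCast_cast, ZMod.cast_id]
    ring
  obtain ⟨c, hc⟩ := hdvd
  have h1 : x k ^ m * (x k ^ v)⁻¹ = 1 := by
    rw [← zpow_neg, ← zpow_add, show m + -v = ((2 * n k : ℕ) : ℤ) * c by omega, zpow_mul,
      h2, one_zpow]
  exact mul_inv_eq_one.mp h1

lemma g_surj (t : G k) : ∃ q : Q k, (match q with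
    | a i => x k ^ i.val | xa i => y k * x k ^ i.val) = t := by
  obtain ⟨m, e, rfl⟩ := normal_form k t
  cases e
  · refine ⟨a (m : ZMod (2 * n k)), ?_⟩
    show x k ^ ((m : ZMod (2 * n k)).val) = _
    simp only [Bool.cond_false, one_mul]
    rw [← zpow_natCast, ← xzpow_eq]
  · refine ⟨xa (m : ZMod (2 * n k)), ?_⟩
    show y k * x k ^ ((m : ZMod (2 * n k)).val) = _
    simp only [Bool.cond_true]
    rw [← zpow_natCast, ← xzpow_eq]

lemma fmap_xpow (m : ℕ) : fmap k (x k ^ m) = a (m : ZMod (2 * n k)) := by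
  rw [map_pow, fmap_x, a_one_pow]

lemma fmap_bij : Function.Bijective (fmap k) := by
  have hfg : ∀ q : Q k, fmap k ((match q with
      | a i => x k ^ i.val | xa i => y k * x k ^ i.val : G k)) = q := by
    rintro (i | i)
    · show fmap k (x k ^ i.val) = a i
      rw [fmap_xpow, ZMod.natCast_rightInverse i]
    · show fmap k (y k * x k ^ i.val) = xa i
      rw [map_mul, fmap_y, fmap_xpow, ZMod.natCast_rightInverse i, xa_mul_a, zero_add]
  constructor
  · intro t1 t2 h12
    obtain ⟨q1, rfl⟩ := g_surj k t1
    obtain ⟨q2, rfl⟩ := g_surj k t2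
    rw [hfg q1, hfg q2] at h12
    rw [h12]
  · intro q
    exact ⟨_, hfg q⟩

instance : NeZero (2 * 2) := ⟨by norm_num⟩

lemma four_dvd : (2 * 2) ∣ (2 * n k) := ⟨2 * k + 1, by show 2 * (2 + 4 * k) = _; ring⟩

def castHom4 : ZMod (2 * n k) →+* ZMod (2 * 2) := ZMod.castHom (four_dvd k) _

def piFun : Q k → QuaternionGroup 2
  | a i => a (castHom4 k i)
  | xa i => xa (castHom4 k i)

lemma castn : castHom4 k ((n k : ℕ) : ZMod (2 * n k)) = ((2 : ℕ) : ZMod (2 * 2)) := by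
  rw [map_natCast]
  show ((2 + 4 * k : ℕ) : ZMod (2 * 2)) = _
  push_cast
  rw [show ((4 : ZMod (2 * 2))) = 0 by decide]
  ring

def piQ : Q k →* QuaternionGroup 2 where
  toFun := piFun k
  map_one' := by
    rw [one_def]
    show a (castHom4 k 0) = 1
    rw [map_zero, ← one_def]
  map_mul' := by
    rintro (i | i) (j | j)
    · rw [a_mul_a]
      show a (castHom4 k (i + j)) = a _ * a _
      rw [a_mul_a, map_add]
    · rw [a_mul_xa]
      show xa (castHom4 k (j - i)) = a _ * xa _
      rw [a_mul_xa, map_sub]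
    · rw [xa_mul_a]
      show xa (castHom4 k (i + j)) = xa _ * a _
      rw [xa_mul_a, map_add]
    · rw [xa_mul_xa]
      show a (castHom4 k (((n k : ℕ) : ZMod (2 * n k)) + j - i)) = xa _ * xa _
      rw [xa_mul_xa, map_sub, map_add, castn]

def FQ : G k →* QuaternionGroup 2 := (piQ k).comp (fmap k)

lemma FQ_x : FQ k (x k) = a 1 := by
  show piQ k (fmap k (x k)) = a 1
  rw [fmap_x]
  show a (castHom4 k 1) = a 1
  rw [map_one]

lemma FQ_y : FQ k (y k) = xa 0 := by
  show piQ k (fmap k (y k)) = xa 0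
  rw [fmap_y]
  show xa (castHom4 k 0) = xa 0
  rw [map_zero]

lemma ker_le (M : Subgroup (G k)) (hx4 : x k ^ 4 ∈ M) : (FQ k).ker ≤ M := by
  intro t ht
  obtain ⟨q, hq⟩ := g_surj k t
  rw [MonoidHom.mem_ker] at ht
  cases q with
  | a i =>
    replace hq : x k ^ i.val = t := hq
    rw [← hq] at ht ⊢
    rw [map_pow, FQ_x, a_one_pow] at ht
    rw [one_def] at ht
    have h0 : ((i.val : ℕ) : ZMod (2 * 2)) = 0 := by
      exact QuaternionGroup.a.inj ht
    obtain ⟨c, hc⟩ := (ZMod.natCast_eq_zero_iff _ _).mp h0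
    rw [hc, pow_mul]
    exact Subgroup.pow_mem M hx4 c
  | xa i =>
    replace hq : y k * x k ^ i.val = t := hq
    rw [← hq] at ht
    rw [map_mul, map_pow, FQ_x, FQ_y, a_one_pow, xa_mul_a, one_def] at ht
    exact absurd ht (by intro h; cases h)

lemma x4_mem : x k ^ 4 ∈ (FQ k).ker := by
  rw [MonoidHom.mem_ker, map_pow, FQ_x]
  decide

lemma FQ_surj : Function.Surjective (FQ k) := by
  rintro (i | i)
  · refine ⟨x k ^ i.val, ?_⟩
    rw [map_pow, FQ_x, a_one_pow]
    congr 1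
    exact ZMod.natCast_rightInverse i
  · refine ⟨y k * x k ^ i.val, ?_⟩
    rw [map_mul, map_pow, FQ_x, FQ_y, a_one_pow, xa_mul_a, zero_add]
    congr 1
    exact ZMod.natCast_rightInverse i

def psi : G k →* G k ⧸ (FQ k).ker :=
  PresentedGroup.toGroup (f := ![QuotientGroup.mk (y k), QuotientGroup.mk (x k)]) (by
    intro r hr
    simp only [genQuaternionRels, Set.mem_insert_iff, Set.mem_singleton_iff] at hr
    rcases hr with rfl | rfl | rfl
    · rw [map_mul, map_inv, map_pow, map_pow, FreeGroup.lift_apply_of, FreeGroup.lift_apply_of]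
      simp only [Matrix.cons_val_zero, Matrix.cons_val_one, Matrix.head_cons]
      rw [← QuotientGroup.mk_pow, ← QuotientGroup.mk_pow, ← QuotientGroup.mk_inv,
        ← QuotientGroup.mk_mul, QuotientGroup.eq_one_iff, MonoidHom.mem_ker, map_mul,
        map_inv, map_pow, map_pow, FQ_x, FQ_y]
      rw [show (n k) = 2 + 4 * k from rfl, pow_add, pow_mul,
        show ((xa 0 : QuaternionGroup 2) ^ 4) = 1 by decide, one_pow, mul_one]
      decide
    · rw [map_pow, FreeGroup.lift_apply_of]
      simp only [Matrix.cons_val_zero]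
      rw [← QuotientGroup.mk_pow, QuotientGroup.eq_one_iff, MonoidHom.mem_ker, map_pow, FQ_y]
      rw [show 2 * (n k) = 4 * (1 + 2 * k) from by show 2 * (2 + 4 * k) = _; ring, pow_mul,
        show ((xa 0 : QuaternionGroup 2) ^ 4) = 1 by decide, one_pow]
    · rw [map_mul, map_mul, map_mul, map_inv, FreeGroup.lift_apply_of, FreeGroup.lift_apply_of]
      simp only [Matrix.cons_val_zero, Matrix.cons_val_one, Matrix.head_cons]
      rw [← QuotientGroup.mk_inv, ← QuotientGroup.mk_mul, ← QuotientGroup.mk_mul,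
        ← QuotientGroup.mk_mul, QuotientGroup.eq_one_iff, MonoidHom.mem_ker, map_mul,
        map_mul, map_mul, map_inv, FQ_x, FQ_y]
      decide)

lemma psi_x : psi k (x k) = QuotientGroup.mk (y k) := by
  show psi k (PresentedGroup.of 0) = _
  rw [psi, PresentedGroup.toGroup.of]
  simp

lemma psi_y : psi k (y k) = QuotientGroup.mk (x k) := by
  show psi k (PresentedGroup.of 1) = _
  rw [psi, PresentedGroup.toGroup.of]
  simp

lemma ker_le_psi : (FQ k).ker ≤ (psi k).ker := by
  refine ker_le k _ ?_
  rw [MonoidHom.mem_ker, map_pow, psi_x, ← QuotientGroup.mk_pow, QuotientGroup.eq_one_iff,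
    MonoidHom.mem_ker, map_pow, FQ_y]
  decide

def phi0 : G k ⧸ (FQ k).ker →* G k ⧸ (FQ k).ker :=
  QuotientGroup.lift _ (psi k) (ker_le_psi k)

lemma phi0_mk (g : G k) : phi0 k (QuotientGroup.mk g) = psi k g := rfl

lemma phi0_comp : (phi0 k).comp (psi k) = QuotientGroup.mk' (FQ k).ker := by
  apply PresentedGroup.ext
  intro i
  fin_cases i
  · show phi0 k (psi k (x k)) = QuotientGroup.mk' _ (x k)
    rw [psi_x, phi0_mk, psi_y]
    rfl
  · show phi0 k (psi k (y k)) = QuotientGroup.mk' _ (y k)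
    rw [psi_y, phi0_mk, psi_x]
    rfl

lemma phi0_phi0 (t : G k ⧸ (FQ k).ker) : phi0 k (phi0 k t) = t := by
  refine QuotientGroup.induction_on t ?_
  intro g
  rw [phi0_mk]
  exact DFunLike.congr_fun (phi0_comp k) g

def phi : (G k ⧸ (FQ k).ker) ≃* (G k ⧸ (FQ k).ker) :=
  { toFun := phi0 k, invFun := phi0 k, left_inv := phi0_phi0 k, right_inv := phi0_phi0 k,
    map_mul' := map_mul (phi0 k) }

lemma cardN : Nat.card (FQ k).ker = 2 * k + 1 := by
  haveI : Finite (G k) :=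
    Finite.of_equiv _ (MulEquiv.ofBijective (fmap k) (fmap_bij k)).toEquiv.symm
  have hcardG : Nat.card (G k) = 4 * (2 + 4 * k) := by
    rw [Nat.card_congr (MulEquiv.ofBijective (fmap k) (fmap_bij k)).toEquiv,
      Nat.card_eq_fintype_card, QuaternionGroup.card]
  have hquot : Nat.card (G k ⧸ (FQ k).ker) = 8 := by
    rw [Nat.card_congr (QuotientGroup.quotientKerEquivOfSurjective (FQ k) (FQ_surj k)).toEquiv,
      Nat.card_eq_fintype_card, QuaternionGroup.card]
  have hmul := Subgroup.card_eq_card_quotient_mul_card_subgroup ((FQ k).ker)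
  rw [hcardG, hquot] at hmul
  omega

end Stmt9

open Stmt9 in
/-- For `n = 2 + 4k` and `G = Q_{2n}` the generalized quaternion group of order `4n`,
the smallest normal subgroup `N` such that swapping `x` and `y` induces an automorphism
of `G ⧸ N` satisfies `G ⧸ N ≅ Q₈`; hence `|N| = 2k + 1`. -/
theorem stmt_9 (k : ℕ) :
    letI G := PresentedGroup (genQuaternionRels (2 + 4 * k))
    letI x : G := PresentedGroup.of 0
    letI y : G := PresentedGroup.of 1
    ∃ (N : Subgroup G) (hN : N.Normal),
      swapInducesAut x y N hN ∧
      (∀ (M : Subgroup G) (hM : M.Normal), swapInducesAut x y M hM → N ≤ M) ∧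
      quotIsoTo N hN (QuaternionGroup 2) ∧ Nat.card N = 2 * k + 1 := by
  refine ⟨(FQ k).ker, MonoidHom.normal_ker _, ⟨phi k, ?_, ?_⟩, ?_, ?_, cardN k⟩
  · show phi0 k (QuotientGroup.mk (Stmt9.x k)) = QuotientGroup.mk (Stmt9.y k)
    rw [phi0_mk, psi_x]
  · show phi0 k (QuotientGroup.mk (Stmt9.y k)) = QuotientGroup.mk (Stmt9.x k)
    rw [phi0_mk, psi_y]
  · intro M hM hsw
    letI := hM
    obtain ⟨φ, hφx, hφy⟩ := hsw
    have hφx' : φ (QuotientGroup.mk' M (Stmt9.x k)) = QuotientGroup.mk' M (Stmt9.y k) := hφx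
    have hφy' : φ (QuotientGroup.mk' M (Stmt9.y k)) = QuotientGroup.mk' M (Stmt9.x k) := hφy
    have e2 : (QuotientGroup.mk' M (Stmt9.y k)) ^ (2 * n k) = 1 := by
      have epre : (QuotientGroup.mk' M (Stmt9.x k)) ^ (2 * n k) = 1 := by
        rw [← map_pow, rel2, map_one]
      have h := congrArg φ epre
      rwa [map_pow, hφx', map_one] at h
    have e1 : (QuotientGroup.mk' M (Stmt9.y k)) ^ (n k) = (QuotientGroup.mk' M (Stmt9.x k)) ^ 2 := by
      have epre : (QuotientGroup.mk' M (Stmt9.x k)) ^ (n k) = (QuotientGroup.mk' M (Stmt9.y k)) ^ 2 := by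
        rw [← map_pow, ← map_pow, rel1]
      have h := congrArg φ epre
      rwa [map_pow, map_pow, hφx', hφy'] at h
    have e3 : (QuotientGroup.mk' M (Stmt9.x k)) ^ 4 = 1 := by
      calc (QuotientGroup.mk' M (Stmt9.x k)) ^ 4
          = ((QuotientGroup.mk' M (Stmt9.x k)) ^ 2) ^ 2 := pow_mul _ 2 2
        _ = ((QuotientGroup.mk' M (Stmt9.y k)) ^ (n k)) ^ 2 := by rw [e1]
        _ = (QuotientGroup.mk' M (Stmt9.y k)) ^ (n k * 2) := (pow_mul _ _ 2).symm
        _ = 1 := by rw [mul_comm (n k) 2, e2]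
    have hx4 : Stmt9.x k ^ 4 ∈ M := by
      rw [← map_pow (QuotientGroup.mk' M)] at e3
      exact (QuotientGroup.eq_one_iff _).mp e3
    exact ker_le k M hx4
  · exact ⟨QuotientGroup.quotientKerEquivOfSurjective (FQ k) (FQ_surj k)⟩
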